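/- Monotonicity of transfer entropy in memory length: fix a horizon T and suppose for each t the conditional distribution of U_t given (X_t, U_{t-n}, ..., U_{t-1}) determines U_t, i.e., U_t is conditionally independent of all other past variables given (X_t, U_{t-n}^{t-1}). Then for every n' ≥ n, the transfer entropy I_{0,n'}(X^T → U^T) = ∑_{t=1}^T I(X_t; U_t | U_{t-n'}^{t-1}) is nonincreasing in n': I_{0,n'}(X^T → U^T) ≥ I_{0,n'+1}(X^T → U^T). -/

import Mathlib

open Finset

/-- Probability of the event `{ω | f ω = a ∧ g ω = b}` under pmf `μ`. -/
noncomputable def jointProb {Ω A B : Type*} [Fintype Ω] [DecidableEq A] [DecidableEq B]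
    (μ : Ω → ℝ) (f : Ω → A) (g : Ω → B) (a : A) (b : B) : ℝ :=
  ∑ ω, if f ω = a ∧ g ω = b then μ ω else 0

/-- Conditional Shannon entropy `H(f | g)` (natural logarithm) of finite random
variables `f, g` defined on a finite probability space `(Ω, μ)`:
`H(f|g) = ∑_{a,b} P(f=a, g=b) log (P(g=b) / P(f=a, g=b))`. -/
noncomputable def condEnt {Ω A B : Type*} [Fintype Ω] [Fintype A] [Fintype B]
    [DecidableEq A] [DecidableEq B]
    (μ : Ω → ℝ) (f : Ω → A) (g : Ω → B) : ℝ :=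
  ∑ a, ∑ b,
    jointProb μ f g a b *
      Real.log ((∑ ω, if g ω = b then μ ω else 0) / jointProb μ f g a b)

/-- Conditional mutual information `I(f ; g | h) = H(g | h) - H(g | (f, h))`. -/
noncomputable def condMI {Ω A B C : Type*} [Fintype Ω] [Fintype A] [Fintype B] [Fintype C]
    [DecidableEq A] [DecidableEq B] [DecidableEq C]
    (μ : Ω → ℝ) (f : Ω → A) (g : Ω → B) (h : Ω → C) : ℝ :=
  condEnt μ g h - condEnt μ g (fun ω => (f ω, h ω))

/-- `f` and `g` are conditionally independent given `h` under the pmf `μ`: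
`P(f=a, g=b, h=c) ⬝ P(h=c) = P(f=a, h=c) ⬝ P(g=b, h=c)` for all `a, b, c`. -/
def CondIndep {Ω A B C : Type*} [Fintype Ω] [DecidableEq A] [DecidableEq B] [DecidableEq C]
    (μ : Ω → ℝ) (f : Ω → A) (g : Ω → B) (h : Ω → C) : Prop :=
  ∀ a b c,
    (∑ ω, if f ω = a ∧ g ω = b ∧ h ω = c then μ ω else 0) *
      (∑ ω, if h ω = c then μ ω else 0) =
    (∑ ω, if f ω = a ∧ h ω = c then μ ω else 0) *
      (∑ ω, if g ω = b ∧ h ω = c then μ ω else 0)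

/-- The window `U_{t-n}^{t-1}` of the control trajectory `u`, represented as a
partially-defined trajectory: `some (u s)` for `t-n ≤ s ≤ t-1`, `none` otherwise. -/
def ctrlWindow {T : ℕ} {𝒰 : Type*} (n : ℕ) (t : Fin T) (u : Fin T → 𝒰) : Fin T → Option 𝒰 :=
  fun s => if s.val < t.val ∧ t.val ≤ s.val + n then some (u s) else none

/-! For each `t`, write `I(X_t; U_t | W_m) = H(U_t | W_m) - H(U_t | X_t, W_m)` with
`W_m = U_{t-m}^{t-1}`. The first term does not increase when the window grows, because `W_{n'}`
is a function of `W_{n'+1}` and conditioning on a coarser variable can only raise the entropy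
(the log-sum inequality on the fibres of the coarsening). The second term is the same for all
`m ≥ n`: `(X_t, W_m)` is a function of `(X_t, W_n)` and of the far past `U^{t-n-1}`, so by the
policy assumption it is conditionally independent of `U_t` given `(X_t, W_n)`, which is itself a
function of `(X_t, W_m)`; hence `(X_t, W_n)` is a sufficient statistic for `U_t`. -/

open Real

theorem sum_mul_log_div_le_mul_log_div_sum {ι : Type*} (s : Finset ι) {j p : ι → ℝ}
    (hj : ∀ i ∈ s, 0 ≤ j i) (hjp : ∀ i ∈ s, j i ≤ p i) :
    ∑ i ∈ s, j i * log (p i / j i) ≤ (∑ i ∈ s, j i) * log ((∑ i ∈ s, p i) / ∑ i ∈ s, j i) := by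
  set J := ∑ i ∈ s, j i
  set P := ∑ i ∈ s, p i
  rcases (sum_nonneg hj).eq_or_lt with hJ | hJ
  · have hj0 : ∀ i ∈ s, j i = 0 := (sum_eq_zero_iff_of_nonneg hj).1 hJ.symm
    rw [show J = 0 from hJ.symm, zero_mul]
    exact (sum_eq_zero fun i hi => by rw [hj0 i hi, zero_mul]).le
  have hP : 0 < P := hJ.trans_le (sum_le_sum hjp)
  have hr : 0 < P / J := div_pos hP hJ
  -- `log x ≤ x - 1` at `x = p i / (j i * (P / J))`
  have pointwise : ∀ i ∈ s, j i * log (p i / j i) ≤ j i * log (P / J) + (p i / (P / J) - j i) := by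
    intro i hi
    rcases (hj i hi).eq_or_lt with h0 | h0
    · rw [← h0]
      have : 0 ≤ p i := (hj i hi).trans (hjp i hi)
      simp only [zero_mul, sub_zero, zero_add]
      positivity
    have hpi : 0 < p i := h0.trans_le (hjp i hi)
    have key := log_le_sub_one_of_pos (div_pos hpi (mul_pos h0 hr))
    rw [log_div hpi.ne' (mul_pos h0 hr).ne', log_mul h0.ne' hr.ne'] at key
    rw [log_div hpi.ne' h0.ne']
    have : j i * (p i / (j i * (P / J)) - 1) = p i / (P / J) - j i := by field_simp
    nlinarith [mul_le_mul_of_nonneg_left key h0.le]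
  calc ∑ i ∈ s, j i * log (p i / j i)
      ≤ ∑ i ∈ s, (j i * log (P / J) + (p i / (P / J) - j i)) := sum_le_sum pointwise
    _ = J * log (P / J) := by
      rw [sum_add_distrib, sum_sub_distrib, ← sum_mul, ← sum_div, div_div_cancel₀ hP.ne',
        sub_self, add_zero]

theorem sum_ite_congr_iff {Ω : Type*} [Fintype Ω] {μ : Ω → ℝ} {P Q : Ω → Prop}
    [DecidablePred P] [DecidablePred Q] (hPQ : ∀ ω, P ω ↔ Q ω) :
    (∑ ω, if P ω then μ ω else 0) = ∑ ω, if Q ω then μ ω else 0 :=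
  sum_congr rfl fun ω _ => if_congr (hPQ ω) rfl rfl

section
variable {Ω A B C : Type*} [Fintype Ω] [DecidableEq A] [DecidableEq B] [DecidableEq C]

theorem sum_sum_jointProb_mul [Fintype A] [Fintype B] (μ : Ω → ℝ) (f : Ω → A) (g : Ω → B)
    (F : A → B → ℝ) : ∑ a, ∑ b, jointProb μ f g a b * F a b = ∑ ω, μ ω * F (f ω) (g ω) := by
  simp only [jointProb, sum_mul, ite_mul, zero_mul, ite_and]
  rw [Finset.sum_comm]
  refine (sum_congr rfl fun b _ => Finset.sum_comm).trans ?_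
  rw [Finset.sum_comm]
  simp

theorem condEnt_eq_sum [Fintype A] [Fintype B] (μ : Ω → ℝ) (f : Ω → A) (g : Ω → B) :
    condEnt μ f g = ∑ ω, μ ω *
      log ((∑ ω', if g ω' = g ω then μ ω' else 0) / jointProb μ f g (f ω) (g ω)) :=
  sum_sum_jointProb_mul μ f g _

theorem sum_ite_and_comp_eq_sum_fiber [Fintype B] (μ : Ω → ℝ) (R : Ω → Prop) [DecidablePred R]
    (g : Ω → B) (ψ : B → C) (c : C) :
    (∑ ω, if R ω ∧ ψ (g ω) = c then μ ω else 0) =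
      ∑ b with ψ b = c, ∑ ω, if R ω ∧ g ω = b then μ ω else 0 := by
  rw [Finset.sum_comm]
  refine sum_congr rfl fun ω _ => ?_
  by_cases hR : R ω <;> simp [hR, sum_ite_eq]

theorem condEnt_le_condEnt_comp [Fintype A] [Fintype B] [Fintype C] {μ : Ω → ℝ}
    (hμ : ∀ ω, 0 ≤ μ ω) (f : Ω → A) (g : Ω → B) (ψ : B → C) :
    condEnt μ f g ≤ condEnt μ f (fun ω => ψ (g ω)) := by
  have hJ : ∀ a c, jointProb μ f (fun ω => ψ (g ω)) a c = ∑ b with ψ b = c, jointProb μ f g a b :=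
    fun a c => sum_ite_and_comp_eq_sum_fiber μ (f · = a) g ψ c
  have hP : ∀ c, (∑ ω, if ψ (g ω) = c then μ ω else 0) =
      ∑ b with ψ b = c, ∑ ω, if g ω = b then μ ω else 0 := by
    simpa using sum_ite_and_comp_eq_sum_fiber μ (fun _ => True) g ψ
  unfold condEnt
  simp only [hJ, hP]
  refine sum_le_sum fun a _ => ?_
  rw [← sum_fiberwise univ ψ]
  exact sum_le_sum fun c _ => sum_mul_log_div_le_mul_log_div_sum _
    (fun b _ => sum_nonneg fun ω _ => by split_ifs <;> simp [hμ])
    (fun b _ => sum_le_sum fun ω _ => by split_ifs <;> simp_all)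

theorem CondIndep.symm {μ : Ω → ℝ} {f : Ω → A} {g : Ω → B} {h : Ω → C}
    (hfg : CondIndep μ f g h) : CondIndep μ g f h := by
  intro b a c
  rw [sum_ite_congr_iff (Q := fun ω => f ω = a ∧ g ω = b ∧ h ω = c) (by tauto), hfg a b c,
    mul_comm]

theorem CondIndep.of_eq_comp [Fintype B] {D : Type*} [DecidableEq D] {μ : Ω → ℝ} {f : Ω → A}
    {g : Ω → B} {h : Ω → C} (hfg : CondIndep μ f g h) {k : Ω → D} (σ : B → C → D)
    (hk : ∀ ω, k ω = σ (g ω) (h ω)) : CondIndep μ f k h := by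
  intro a d c
  have fiber : ∀ R : Ω → Prop, [DecidablePred R] → (∀ ω, R ω → h ω = c) →
      (∑ ω, if R ω ∧ k ω = d then μ ω else 0) =
        ∑ b with σ b c = d, ∑ ω, if R ω ∧ g ω = b then μ ω else 0 := by
    intro R _ hR
    rw [← sum_ite_and_comp_eq_sum_fiber]
    exact sum_ite_congr_iff fun ω => by grind
  have hfkh : (∑ ω, if f ω = a ∧ k ω = d ∧ h ω = c then μ ω else 0) =
      ∑ b with σ b c = d, ∑ ω, if f ω = a ∧ g ω = b ∧ h ω = c then μ ω else 0 := by
    rw [sum_ite_congr_iff (Q := fun ω => (f ω = a ∧ h ω = c) ∧ k ω = d) (by tauto),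
      fiber _ fun ω hω => hω.2]
    exact sum_congr rfl fun b _ => sum_ite_congr_iff (by tauto)
  have hkh : (∑ ω, if k ω = d ∧ h ω = c then μ ω else 0) =
      ∑ b with σ b c = d, ∑ ω, if g ω = b ∧ h ω = c then μ ω else 0 := by
    rw [sum_ite_congr_iff (Q := fun ω => h ω = c ∧ k ω = d) (by tauto), fiber _ fun ω hω => hω]
    exact sum_congr rfl fun b _ => sum_ite_congr_iff (by tauto)
  rw [hfkh, hkh, sum_mul, mul_sum]
  exact sum_congr rfl fun b _ => hfg a b c

theorem condEnt_prod_eq_of_condIndep [Fintype A] [Fintype B] [Fintype C] {μ : Ω → ℝ}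
    (hμ : ∀ ω, 0 ≤ μ ω) {f : Ω → A} {g : Ω → B} {h : Ω → C} (hfg : CondIndep μ f g h) :
    condEnt μ g (fun ω => (f ω, h ω)) = condEnt μ g h := by
  rw [condEnt_eq_sum, condEnt_eq_sum]
  refine sum_congr rfl fun ω _ => ?_
  rcases (hμ ω).eq_or_lt with h0 | h0
  · rw [← h0, zero_mul, zero_mul]
  have pos : ∀ R : Ω → Prop, [DecidablePred R] → R ω → 0 < ∑ ω', if R ω' then μ ω' else 0 :=
    fun R _ hR => h0.trans_le <| single_le_sum (f := fun ω' => if R ω' then μ ω' else 0)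
      (fun ω' _ => by split_ifs <;> simp [hμ]) (mem_univ ω) |>.trans_eq' (if_pos hR)
  have hfh : (∑ ω', if (f ω', h ω') = (f ω, h ω) then μ ω' else 0) =
      ∑ ω', if f ω' = f ω ∧ h ω' = h ω then μ ω' else 0 :=
    sum_ite_congr_iff fun _ => Prod.mk_inj
  have hgfh : jointProb μ g (fun ω => (f ω, h ω)) (g ω) (f ω, h ω) =
      ∑ ω', if f ω' = f ω ∧ g ω' = g ω ∧ h ω' = h ω then μ ω' else 0 :=
    sum_ite_congr_iff fun ω' => by simp only [Prod.mk.injEq]; tauto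
  rw [hfh, hgfh, jointProb]
  congr 2
  rw [div_eq_div_iff (pos _ ⟨rfl, rfl, rfl⟩).ne' (pos _ ⟨rfl, rfl⟩).ne']
  linarith [hfg (f ω) (g ω) (h ω)]

theorem condEnt_eq_of_condIndep [Fintype A] [Fintype B] [Fintype C] {μ : Ω → ℝ}
    (hμ : ∀ ω, 0 ≤ μ ω) {X : Ω → A} {V : Ω → B} {Z : Ω → C} (τ : B → C)
    (hZ : ∀ ω, Z ω = τ (V ω)) (hVX : CondIndep μ V X Z) :
    condEnt μ X V = condEnt μ X Z := by
  have hZV : Z = fun ω => τ (V ω) := funext hZ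
  refine le_antisymm ?_ ?_
  · exact hZV ▸ condEnt_le_condEnt_comp hμ X V τ
  · calc condEnt μ X Z = condEnt μ X (fun ω => (V ω, Z ω)) :=
          (condEnt_prod_eq_of_condIndep hμ hVX).symm
      _ ≤ condEnt μ X V := condEnt_le_condEnt_comp hμ X _ Prod.fst

end

def truncWindow {T : ℕ} {α : Type*} (n : ℕ) (t : Fin T) (v : Fin T → Option α) :
    Fin T → Option α :=
  fun s => if s.val < t.val ∧ t.val ≤ s.val + n then v s else none

section Window
variable {T : ℕ} {𝒰 : Type*} {n m : ℕ} (t : Fin T) (u : Fin T → 𝒰)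

theorem truncWindow_ctrlWindow (hnm : n ≤ m) :
    truncWindow n t (ctrlWindow m t u) = ctrlWindow n t u := by
  funext s
  simp only [truncWindow, ctrlWindow]
  split_ifs <;> first | rfl | omega

theorem ctrlWindow_eq_truncWindow_ite :
    ctrlWindow m t u = truncWindow m t (fun s => if t.val ≤ s.val + n then ctrlWindow n t u s
      else if s.val + n < t.val then some (u s) else none) := by
  funext s
  simp only [truncWindow, ctrlWindow]
  split_ifs <;> first | rfl | omega

end Window

theorem condEnt_ctrl_given_state_window_eq {T : ℕ} {𝒳 𝒰 : Type*} [Fintype 𝒳] [Fintype 𝒰]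
    [DecidableEq 𝒳] [DecidableEq 𝒰] {μ : (Fin T → 𝒳) × (Fin T → 𝒰) → ℝ} (hμ : ∀ ω, 0 ≤ μ ω)
    {n m : ℕ} (hnm : n ≤ m) {t : Fin T}
    (hpolicy : CondIndep μ (fun ω => ω.2 t)
      (fun ω => ((fun s : Fin T => if s.val < t.val then some (ω.1 s) else none),
                 (fun s : Fin T => if s.val + n < t.val then some (ω.2 s) else none)))
      (fun ω => (ω.1 t, ctrlWindow n t ω.2))) :
    condEnt μ (fun ω => ω.2 t) (fun ω => (ω.1 t, ctrlWindow m t ω.2)) =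
      condEnt μ (fun ω => ω.2 t) (fun ω => (ω.1 t, ctrlWindow n t ω.2)) := by
  refine condEnt_eq_of_condIndep hμ (fun v => (v.1, truncWindow n t v.2))
    (fun ω => by rw [truncWindow_ctrlWindow t ω.2 hnm]) (CondIndep.symm ?_)
  refine hpolicy.of_eq_comp (fun y z => (z.1, truncWindow m t fun s =>
    if t.val ≤ s.val + n then z.2 s else y.2 s)) fun ω => ?_
  rw [ctrlWindow_eq_truncWindow_ite t ω.2]

theorem transferEntropy_monotone_general
    {T : ℕ} {𝒳 𝒰 : Type*} [Fintype 𝒳] [Fintype 𝒰] [DecidableEq 𝒳] [DecidableEq 𝒰]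
    (n : ℕ)
    (μ : (Fin T → 𝒳) × (Fin T → 𝒰) → ℝ)
    (hμ0 : ∀ ω, 0 ≤ μ ω)
    (hpolicy : ∀ t : Fin T,
      CondIndep μ
        (fun ω => ω.2 t)  -- U_t
        (fun ω => ((fun s : Fin T => if s.val < t.val then some (ω.1 s) else none),
                   (fun s : Fin T => if s.val + n < t.val then some (ω.2 s) else none)))
                          -- (X^{t-1}, U^{t-n-1})
        (fun ω => (ω.1 t, ctrlWindow n t ω.2)))  -- (X_t, U_{t-n}^{t-1})
    (n' : ℕ) (hn : n ≤ n') :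
    ∑ t : Fin T, condMI μ (fun ω => ω.1 t) (fun ω => ω.2 t)
        (fun ω => ctrlWindow (n' + 1) t ω.2)
      ≤
    ∑ t : Fin T, condMI μ (fun ω => ω.1 t) (fun ω => ω.2 t)
        (fun ω => ctrlWindow n' t ω.2) := by
  refine sum_le_sum fun t _ => ?_
  have hcoarse := condEnt_le_condEnt_comp hμ0 (fun ω => ω.2 t)
    (fun ω => ctrlWindow (n' + 1) t ω.2) (truncWindow n' t)
  simp only [truncWindow_ctrlWindow t _ n'.le_succ] at hcoarse
  rw [condMI, condMI, condEnt_ctrl_given_state_window_eq hμ0 (hn.trans n'.le_succ) (hpolicy t),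
    condEnt_ctrl_given_state_window_eq hμ0 hn (hpolicy t)]
  linarith

/-- Monotonicity of transfer entropy in the memory length: if for each `t` the control
`U_t` is conditionally independent of all other past variables `(X^{t-1}, U^{t-n-1})`
given `(X_t, U_{t-n}^{t-1})`, then for every `n' ≥ n`,
`I_{0,n'}(X^T → U^T) = ∑_t I(X_t; U_t | U_{t-n'}^{t-1})` is nonincreasing in `n'`:
`I_{0,n'}(X^T → U^T) ≥ I_{0,n'+1}(X^T → U^T)`. -/
theorem transferEntropy_monotone
    {T : ℕ} {𝒳 𝒰 : Type*} [Fintype 𝒳] [Fintype 𝒰] [DecidableEq 𝒳] [DecidableEq 𝒰]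
    (n : ℕ)
    (μ : (Fin T → 𝒳) × (Fin T → 𝒰) → ℝ)
    (hμ0 : ∀ ω, 0 ≤ μ ω) (hμ1 : ∑ ω, μ ω = 1)
    (hpolicy : ∀ t : Fin T,
      CondIndep μ
        (fun ω => ω.2 t)  -- U_t
        (fun ω => ((fun s : Fin T => if s.val < t.val then some (ω.1 s) else none),
                   (fun s : Fin T => if s.val + n < t.val then some (ω.2 s) else none)))
                          -- (X^{t-1}, U^{t-n-1})
        (fun ω => (ω.1 t, ctrlWindow n t ω.2)))  -- (X_t, U_{t-n}^{t-1})
    (n' : ℕ) (hn : n ≤ n') :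
    ∑ t : Fin T, condMI μ (fun ω => ω.1 t) (fun ω => ω.2 t)
        (fun ω => ctrlWindow (n' + 1) t ω.2)
      ≤
    ∑ t : Fin T, condMI μ (fun ω => ω.1 t) (fun ω => ω.2 t)
        (fun ω => ctrlWindow n' t ω.2) :=
  transferEntropy_monotone_general n μ hμ0 hpolicy n' hn
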